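/- Assume k11 = k21 and k22 = k12, and let R > 0. If for some λ ∈ (0,1) the Nash effort matrix e*(z_NA(R)) equals the Pareto effort matrix a*(z_Pe(λ), λ), then necessarily λ = λ* := (1 + R k11)/(2 + R(k11 + k22)), and λ* ∈ (0,1). Moreover, e*(z_NA(R)) = a*(z_Pe(λ*), λ*) holds if and only if (1 + R k22)/(1 + R(k22 + k11)) = ((1 − λ*)² k22 + (1 − λ*) λ* k11)/((λ*)² k11 + (1 − λ*)² k22). -/

import Mathlib

/-!
With `k₂₁ = k₁₁` and `k₁₂ = k₂₂` both rows of `z_NA(R)` coincide, and so do both rows of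
`z_Pe(λ)`; hence the Nash and the Pareto effort matrices both have the shape
`[[u/k₁₁, -v/k₂₂], [-u/k₁₁, v/k₂₂]]`, and they agree iff their pairs `(u, v)` agree. On the
Pareto side `(u, v) = ((1-λ) w, λ w)` for a weight `w = w(λ)`, so `λ = v/(u+v)` is forced by the
Nash pair, which is `λ*`. At `λ = λ*` the two coordinate equations are equivalent, as both say
`w = u + v`; the first one is the displayed identity.
-/

/-- The Pareto-optimal sensitivities `z_Pe(λ)`. -/
noncomputable def zPe (k11 k12 k21 k22 lam : ℝ) : Fin 2 → Fin 2 → ℝ :=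
  ![![(1 - lam) ^ 2 * k12 / (lam ^ 2 * k11 + (1 - lam) ^ 2 * k12),
      lam ^ 2 * k11 / (lam ^ 2 * k11 + (1 - lam) ^ 2 * k12)],
    ![(1 - lam) ^ 2 * k22 / (lam ^ 2 * k21 + (1 - lam) ^ 2 * k22),
      lam ^ 2 * k21 / (lam ^ 2 * k21 + (1 - lam) ^ 2 * k22)]]

/-- The optimal sensitivities `z_NA(R)` in the no-Planner (Nash) model. -/
noncomputable def zNA (k11 k12 k21 k22 R : ℝ) : Fin 2 → Fin 2 → ℝ :=
  ![![(1 + R * k12) / (1 + R * (k11 + k12)), (1 + R * k11) / (1 + R * (k11 + k12))],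
    ![(1 + R * k22) / (1 + R * (k21 + k22)), (1 + R * k21) / (1 + R * (k21 + k22))]]

/-- The Pareto effort matrix `a*(z, λ)`. -/
noncomputable def aStar (k11 k12 k21 k22 lam : ℝ) (z : Fin 2 → Fin 2 → ℝ) : Fin 2 → Fin 2 → ℝ :=
  ![![(lam * z 0 0 + (1 - lam) * z 0 1) / (lam * k11),
      -((lam * z 0 0 + (1 - lam) * z 0 1) / ((1 - lam) * k12))],
    ![-((lam * z 1 0 + (1 - lam) * z 1 1) / (lam * k21)),
      (lam * z 1 0 + (1 - lam) * z 1 1) / ((1 - lam) * k22)]]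

/-- The Nash effort matrix `e*(z)`. -/
noncomputable def eStar (k11 k12 k21 k22 : ℝ) (z : Fin 2 → Fin 2 → ℝ) : Fin 2 → Fin 2 → ℝ :=
  ![![z 0 0 / k11, -(z 0 1 / k12)], ![-(z 1 0 / k21), z 1 1 / k22]]

section Field

variable {K : Type*} [Field K]

lemma eq_div_add_of_eq_mul {a b t w : K} (hab : a + b ≠ 0)
    (ha : a = (1 - t) * w) (hb : b = t * w) : t = b / (a + b) := by
  have hsum : a + b = w := by rw [ha, hb]; ring
  rw [hsum] at hab ⊢
  rw [hb, mul_div_cancel_right₀ t hab]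

lemma eq_mul_and_eq_mul_iff_of_eq_div_add {a b t w : K} (ha : a ≠ 0) (hab : a + b ≠ 0)
    (ht : t = b / (a + b)) : a = (1 - t) * w ∧ b = t * w ↔ a = (1 - t) * w := by
  have hcompl : 1 - t = a / (a + b) := by rw [ht]; field_simp; ring
  refine ⟨And.left, fun h => ⟨h, ?_⟩⟩
  have hw : w = a + b := by
    rw [hcompl, div_mul_eq_mul_div, eq_div_iff hab] at h
    exact (mul_left_cancel₀ ha h).symm
  rw [ht, hw, div_mul_cancel₀ b hab]

end Field

noncomputable def symmEffort (k₁ k₂ u v : ℝ) : Fin 2 → Fin 2 → ℝ :=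
  ![![u / k₁, -(v / k₂)], ![-(u / k₁), v / k₂]]

lemma symmEffort_inj {k₁ k₂ : ℝ} (hk₁ : k₁ ≠ 0) (hk₂ : k₂ ≠ 0) {u v u' v' : ℝ} :
    symmEffort k₁ k₂ u v = symmEffort k₁ k₂ u' v' ↔ u = u' ∧ v = v' := by
  refine ⟨fun h => ?_, fun ⟨hu, hv⟩ => hu ▸ hv ▸ rfl⟩
  have h00 := congrFun (congrFun h 0) 0
  have h11 := congrFun (congrFun h 1) 1
  simp only [symmEffort, Matrix.cons_val_zero, Matrix.cons_val_one] at h00 h11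
  exact ⟨(div_left_inj' hk₁).mp h00, (div_left_inj' hk₂).mp h11⟩

lemma eStar_zNA_symm (k₁ k₂ R : ℝ) :
    eStar k₁ k₂ k₁ k₂ (zNA k₁ k₂ k₁ k₂ R)
      = symmEffort k₁ k₂ ((1 + R * k₂) / (1 + R * (k₁ + k₂)))
          ((1 + R * k₁) / (1 + R * (k₁ + k₂))) :=
  rfl

noncomputable def paretoWeight (k₁ k₂ lam : ℝ) : ℝ :=
  ((1 - lam) * k₂ + lam * k₁) / (lam ^ 2 * k₁ + (1 - lam) ^ 2 * k₂)

lemma one_sub_mul_paretoWeight (k₁ k₂ lam : ℝ) :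
    (1 - lam) * paretoWeight k₁ k₂ lam
      = ((1 - lam) ^ 2 * k₂ + (1 - lam) * lam * k₁) / (lam ^ 2 * k₁ + (1 - lam) ^ 2 * k₂) := by
  unfold paretoWeight; ring

lemma aStar_zPe_symm (k₁ k₂ : ℝ) {lam : ℝ} (hlam : lam ≠ 0) (hlam' : 1 - lam ≠ 0) :
    aStar k₁ k₂ k₁ k₂ lam (zPe k₁ k₂ k₁ k₂ lam)
      = symmEffort k₁ k₂ ((1 - lam) * paretoWeight k₁ k₂ lam) (lam * paretoWeight k₁ k₂ lam) := by
  have hsum : lam * ((1 - lam) ^ 2 * k₂ / (lam ^ 2 * k₁ + (1 - lam) ^ 2 * k₂))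
      + (1 - lam) * (lam ^ 2 * k₁ / (lam ^ 2 * k₁ + (1 - lam) ^ 2 * k₂))
      = lam * (1 - lam) * paretoWeight k₁ k₂ lam := by
    unfold paretoWeight; ring
  have hleft : lam * (1 - lam) * paretoWeight k₁ k₂ lam / lam
      = (1 - lam) * paretoWeight k₁ k₂ lam := by field_simp
  have hright : lam * (1 - lam) * paretoWeight k₁ k₂ lam / (1 - lam)
      = lam * paretoWeight k₁ k₂ lam := by field_simp
  simp only [aStar, zPe, symmEffort, Matrix.cons_val_zero, Matrix.cons_val_one, hsum,
    ← div_div, hleft, hright]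

theorem nash_pareto_symmetric_costs_general (k11 k12 k21 k22 : ℝ)
    (hk11 : 0 < k11) (hk22 : 0 < k22)
    (h1 : k11 = k21) (h2 : k22 = k12) (R : ℝ) (hR : 0 < R) :
    (∀ lam ∈ Set.Ioo (0 : ℝ) 1,
        eStar k11 k12 k21 k22 (zNA k11 k12 k21 k22 R)
            = aStar k11 k12 k21 k22 lam (zPe k11 k12 k21 k22 lam) →
          lam = (1 + R * k11) / (2 + R * (k11 + k22))) ∧
      (1 + R * k11) / (2 + R * (k11 + k22)) ∈ Set.Ioo (0 : ℝ) 1 ∧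
      (eStar k11 k12 k21 k22 (zNA k11 k12 k21 k22 R)
          = aStar k11 k12 k21 k22 ((1 + R * k11) / (2 + R * (k11 + k22)))
              (zPe k11 k12 k21 k22 ((1 + R * k11) / (2 + R * (k11 + k22)))) ↔
        (1 + R * k22) / (1 + R * (k22 + k11))
          = ((1 - (1 + R * k11) / (2 + R * (k11 + k22))) ^ 2 * k22
              + (1 - (1 + R * k11) / (2 + R * (k11 + k22)))
                * ((1 + R * k11) / (2 + R * (k11 + k22))) * k11)
            / (((1 + R * k11) / (2 + R * (k11 + k22))) ^ 2 * k11
              + (1 - (1 + R * k11) / (2 + R * (k11 + k22))) ^ 2 * k22)) := by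
  subst h1 h2
  set u := (1 + R * k22) / (1 + R * (k11 + k22))
  set v := (1 + R * k11) / (1 + R * (k11 + k22))
  have hu : 0 < u := by positivity
  have hv : 0 < v := by positivity
  have hlamStar : (1 + R * k11) / (2 + R * (k11 + k22)) = v / (u + v) := by
    simp only [u, v]; field_simp; ring
  have hmem : v / (u + v) ∈ Set.Ioo (0 : ℝ) 1 :=
    ⟨by positivity, (div_lt_one (by positivity)).mpr (by linarith)⟩
  have hnash : ∀ lam ∈ Set.Ioo (0 : ℝ) 1,
      eStar k11 k22 k11 k22 (zNA k11 k22 k11 k22 R) = aStar k11 k22 k11 k22 lam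
          (zPe k11 k22 k11 k22 lam) ↔
        u = (1 - lam) * paretoWeight k11 k22 lam ∧ v = lam * paretoWeight k11 k22 lam :=
    fun lam hlam => by
      rw [eStar_zNA_symm, aStar_zPe_symm _ _ hlam.1.ne' (sub_ne_zero.mpr hlam.2.ne'),
        symmEffort_inj hk11.ne' hk22.ne']
  rw [hlamStar, add_comm k22 k11, ← one_sub_mul_paretoWeight]
  refine ⟨fun lam hlam h => ?_, hmem, ?_⟩
  · obtain ⟨hu', hv'⟩ := (hnash lam hlam).mp h
    exact eq_div_add_of_eq_mul (by positivity) hu' hv'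
  · rw [hnash _ hmem]
    exact eq_mul_and_eq_mul_iff_of_eq_div_add hu.ne' (by positivity) rfl

/-- assume `k11 = k21`, `k22 = k12` and `R > 0`. If the Nash effort
`e*(z_NA(R))` equals a Pareto effort `a*(z_Pe(λ), λ)` for some `λ ∈ (0,1)`, then necessarily
`λ = λ* := (1 + R k11)/(2 + R (k11 + k22))`; moreover `λ* ∈ (0,1)` and
`e*(z_NA(R)) = a*(z_Pe(λ*), λ*)` iff
`(1 + R k22)/(1 + R (k22 + k11)) = ((1-λ*)² k22 + (1-λ*) λ* k11)/((λ*)² k11 + (1-λ*)² k22)`. -/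
theorem nash_pareto_symmetric_costs (k11 k12 k21 k22 : ℝ)
    (hk11 : 0 < k11) (hk12 : 0 < k12) (hk21 : 0 < k21) (hk22 : 0 < k22)
    (h1 : k11 = k21) (h2 : k22 = k12) (R : ℝ) (hR : 0 < R) :
    (∀ lam ∈ Set.Ioo (0 : ℝ) 1,
        eStar k11 k12 k21 k22 (zNA k11 k12 k21 k22 R)
            = aStar k11 k12 k21 k22 lam (zPe k11 k12 k21 k22 lam) →
          lam = (1 + R * k11) / (2 + R * (k11 + k22))) ∧
      (1 + R * k11) / (2 + R * (k11 + k22)) ∈ Set.Ioo (0 : ℝ) 1 ∧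
      (eStar k11 k12 k21 k22 (zNA k11 k12 k21 k22 R)
          = aStar k11 k12 k21 k22 ((1 + R * k11) / (2 + R * (k11 + k22)))
              (zPe k11 k12 k21 k22 ((1 + R * k11) / (2 + R * (k11 + k22)))) ↔
        (1 + R * k22) / (1 + R * (k22 + k11))
          = ((1 - (1 + R * k11) / (2 + R * (k11 + k22))) ^ 2 * k22
              + (1 - (1 + R * k11) / (2 + R * (k11 + k22)))
                * ((1 + R * k11) / (2 + R * (k11 + k22))) * k11)
            / (((1 + R * k11) / (2 + R * (k11 + k22))) ^ 2 * k11
              + (1 - (1 + R * k11) / (2 + R * (k11 + k22))) ^ 2 * k22)) :=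
  nash_pareto_symmetric_costs_general k11 k12 k21 k22 hk11 hk22 h1 h2 R hR
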